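/- arXiv:2411.17572 — 4 statements merged into one kernel-verified Lean document; each statement's English description precedes it below -/
import Mathlib

section
/- Let h ∈ ℝ[t_1,…,t_p] be a dually Lorentzian polynomial, and write h = Σ_n a_n t^n with a_n ∈ ℝ. Then h is discretely log-concave: a_n^2 ≥ a_{n+e_i−e_j} · a_{n−e_i+e_j} for all n ∈ ℕ^p and all indices i, j ∈ {1,…,p}, where a_m := 0 whenever m has a negative entry. -/
open MvPolynomial

section Defs

variable {σ : Type*} [Fintype σ] [DecidableEq σ]

/-- A set `J ⊆ ℕ^σ` of exponent vectors is M-convex. -/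
def MConvex (J : Set (σ →₀ ℕ)) : Prop :=
  ∀ q ∈ J, ∀ r ∈ J, ∀ i : σ, q i < r i →
    ∃ j : σ, r j < q j ∧ q + Finsupp.single i 1 - Finsupp.single j 1 ∈ J ∧
      r - Finsupp.single i 1 + Finsupp.single j 1 ∈ J

/-- The normalization operator `N(Σ aₙ tⁿ) = Σ (aₙ/n!) tⁿ`, where `n! = n₁!⋯n_p!`. -/
noncomputable def normalizeOp (h : MvPolynomial σ ℝ) : MvPolynomial σ ℝ :=
  h.support.sum fun n => monomial n (h.coeff n / n.prod fun _ k => (Nat.factorial k : ℝ))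

/-- The (symmetric) Hessian matrix of a polynomial: the constant terms of its second partials. -/
noncomputable def hessianMatrix (g : MvPolynomial σ ℝ) : Matrix σ σ ℝ :=
  fun i j => MvPolynomial.coeff 0 (pderiv i (pderiv j g))

/-- A real symmetric matrix has at most one positive eigenvalue iff its quadratic form is
positive on no subspace of dimension `≥ 2` (minus the origin). -/
def AtMostOnePosEig (H : Matrix σ σ ℝ) : Prop :=
  ∀ W : Submodule ℝ (σ → ℝ),
    (∀ v ∈ W, v ≠ 0 → 0 < dotProduct v (H.mulVec v)) → Module.finrank ℝ W ≤ 1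

/-- Lorentzian polynomial: homogeneous of some degree `d`, nonnegative coefficients, M-convex
support, and every `(d-2)`-fold partial derivative is a quadratic form with at most one
positive eigenvalue. -/
def IsLorentzian (h : MvPolynomial σ ℝ) : Prop :=
  ∃ d : ℕ, h.IsHomogeneous d ∧ (∀ m, 0 ≤ h.coeff m) ∧
    MConvex (↑h.support : Set (σ →₀ ℕ)) ∧
    ∀ l : List σ, l.length = d - 2 →
      AtMostOnePosEig (hessianMatrix (l.foldr (fun i g => pderiv i g) h))

/-- `t^m · h(t₁⁻¹, …, t_p⁻¹)`, defined when `m` dominates the support of `h`. -/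
noncomputable def flipPoly (m : σ →₀ ℕ) (h : MvPolynomial σ ℝ) : MvPolynomial σ ℝ :=
  h.support.sum fun n => monomial (m - n) (h.coeff n)

/-- `h` is dually Lorentzian if `N(t^m h(1/t))` is Lorentzian for some `m` large enough that
`t^m h(1/t)` is a polynomial. -/
def IsDuallyLorentzian (h : MvPolynomial σ ℝ) : Prop :=
  ∃ m : σ →₀ ℕ, (∀ n ∈ h.support, n ≤ m) ∧ IsLorentzian (normalizeOp (flipPoly m h))

/-- The coefficient of `h` at an integer exponent vector, with the convention that it is `0`
whenever some entry is negative. -/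
noncomputable def coeffInt {R : Type*} [CommSemiring R] (h : MvPolynomial σ R) (m : σ → ℤ) : R :=
  if ∀ i, 0 ≤ m i then h.coeff (Finsupp.equivFunOnFinite.symm fun i => (m i).toNat) else 0

/-- Discrete log-concavity: `aₙ² ≥ a_{n+eᵢ-eⱼ} · a_{n-eᵢ+eⱼ}` for all `n, i, j`. -/
def DiscretelyLogConcave {R : Type*} [CommRing R] [LinearOrder R] [IsStrictOrderedRing R] (h : MvPolynomial σ R) : Prop :=
  ∀ (n : σ →₀ ℕ) (i j : σ),
    coeffInt h (fun k => (n k : ℤ) + (if k = i then 1 else 0) - (if k = j then 1 else 0)) *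
      coeffInt h (fun k => (n k : ℤ) - (if k = i then 1 else 0) + (if k = j then 1 else 0)) ≤
      h.coeff n ^ 2

/-- The `w`-truncation of a polynomial: keep exactly the terms with exponent vector `≤ w`
componentwise. -/
noncomputable def truncationPoly {R : Type*} [CommSemiring R] (w : σ →₀ ℕ)
    (h : MvPolynomial σ R) : MvPolynomial σ R :=
  (h.support.filter fun n => n ≤ w).sum fun n => monomial n (h.coeff n)

set_option linter.unusedSectionVars false

set_option maxHeartbeats 1000000


noncomputable def factR (u : σ →₀ ℕ) : ℝ := u.prod fun _ k => (Nat.factorial k : ℝ)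

lemma factR_eq (u : σ →₀ ℕ) : factR u = ∏ i, ((u i).factorial : ℝ) :=
  Finsupp.prod_fintype _ _ (by simp)

lemma factR_pos (u : σ →₀ ℕ) : 0 < factR u := by
  rw [factR_eq]
  exact Finset.prod_pos fun i _ => by positivity

lemma factR_zero : factR (0 : σ →₀ ℕ) = 1 := by simp [factR]

lemma factR_add_single (u : σ →₀ ℕ) (i : σ) :
    factR (u + Finsupp.single i 1) = factR u * ((u i : ℝ) + 1) := by
  rw [factR_eq, factR_eq]
  have key : ∀ j : σ, (((u + Finsupp.single i 1 : σ →₀ ℕ) j).factorial : ℝ)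
      = ((u j).factorial : ℝ) * (if j = i then ((u i : ℝ) + 1) else 1) := by
    intro j
    by_cases hj : j = i
    · subst hj
      simp only [Finsupp.add_apply, Finsupp.single_eq_same, if_pos rfl, Nat.factorial_succ]
      push_cast; ring
    · simp [hj, Finsupp.single_apply, if_neg (fun h : i = j => hj h.symm)]
  rw [Finset.prod_congr rfl (fun j _ => key j), Finset.prod_mul_distrib]
  congr 1
  simp

noncomputable def listCount (l : List σ) : σ →₀ ℕ := Multiset.toFinsupp (↑l : Multiset σ)

lemma listCount_cons (i : σ) (l : List σ) :
    listCount (i :: l) = Finsupp.single i 1 + listCount l := by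
  simp only [listCount]
  have : (↑(i :: l) : Multiset σ) = {i} + ↑l := by
    simp [Multiset.cons_coe]
  rw [this, map_add]
  congr 1
  simp [Multiset.toFinsupp_singleton]

lemma coeff_pderiv (i : σ) (f : MvPolynomial σ ℝ) (u : σ →₀ ℕ) :
    coeff u (pderiv i f) = coeff (u + Finsupp.single i 1) f * ((u i : ℝ) + 1) := by
  induction f using MvPolynomial.induction_on' with
  | monomial s a =>
    rw [pderiv_monomial, coeff_monomial, coeff_monomial]
    by_cases hsi : s i = 0
    · have h1 : ¬ (s = u + Finsupp.single i 1) := fun he => by simp [he] at hsi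
      rw [if_neg h1]
      split_ifs <;> simp [hsi]
    · have hle : Finsupp.single i 1 ≤ s := by
        rw [Finsupp.single_le_iff]; omega
      have hiff : s - Finsupp.single i 1 = u ↔ s = u + Finsupp.single i 1 := by
        constructor
        · intro he; rw [← he, tsub_add_cancel_of_le hle]
        · intro he; rw [he, add_tsub_cancel_right]
      by_cases hc : s = u + Finsupp.single i 1
      · rw [if_pos (hiff.mpr hc), if_pos hc]
        have : s i = u i + 1 := by simp [hc]
        rw [this]; push_cast; ring
      · rw [if_neg (fun he => hc (hiff.mp he)), if_neg hc, zero_mul]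
  | add f g hf hg => simp [hf, hg, add_mul]

lemma coeff_foldr_pderiv (l : List σ) (f : MvPolynomial σ ℝ) (u : σ →₀ ℕ) :
    coeff u (l.foldr (fun i g => pderiv i g) f) * factR u
      = coeff (u + listCount l) f * factR (u + listCount l) := by
  induction l generalizing u with
  | nil => simp [listCount]
  | cons i l ih =>
    rw [List.foldr_cons, _root_.coeff_pderiv, mul_assoc,
      mul_comm ((u i : ℝ) + 1) (factR u), ← factR_add_single, ih, listCount_cons]
    congr 2 <;> rw [← add_assoc, add_comm u (Finsupp.single i 1)]

lemma coeff_normalizeOp (f : MvPolynomial σ ℝ) (u : σ →₀ ℕ) :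
    (normalizeOp f).coeff u = f.coeff u / factR u := by
  rw [normalizeOp, coeff_sum]
  simp only [coeff_monomial]
  have : ∀ n : σ →₀ ℕ, (n.prod fun _ k => (Nat.factorial k : ℝ)) = factR n := fun _ => rfl
  simp only [this]
  rw [Finset.sum_ite_eq' f.support u (fun n => f.coeff n / factR n)]
  split_ifs with hu
  · rfl
  · rw [MvPolynomial.notMem_support_iff.mp hu, zero_div]

lemma coeff_flipPoly {m : σ →₀ ℕ} {h : MvPolynomial σ ℝ} (hm : ∀ n ∈ h.support, n ≤ m)
    (u : σ →₀ ℕ) (hu : u ≤ m) : (flipPoly m h).coeff u = h.coeff (m - u) := by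
  rw [flipPoly, coeff_sum]
  simp only [coeff_monomial]
  by_cases hmem : m - u ∈ h.support
  · rw [Finset.sum_eq_single_of_mem (m - u) hmem]
    · rw [if_pos (tsub_tsub_cancel_of_le hu)]
    · intro n hn hne
      rw [if_neg]
      intro he
      exact hne (by rw [← he, tsub_tsub_cancel_of_le (hm n hn)])
  · rw [MvPolynomial.notMem_support_iff.mp hmem, Finset.sum_eq_zero]
    intro n hn
    rw [if_neg]
    intro he
    exact hmem (by rwa [← he, tsub_tsub_cancel_of_le (hm n hn)])

lemma coeffInt_eq {R : Type*} [CommSemiring R] (h : MvPolynomial σ R) (v : σ → ℤ) (u : σ →₀ ℕ)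
    (hv : ∀ k, v k = u k) : coeffInt h v = h.coeff u := by
  rw [coeffInt, if_pos (fun k => by rw [hv k]; exact Int.natCast_nonneg _)]
  congr 1
  ext k
  simp [hv k]

lemma coeffInt_neg {R : Type*} [CommSemiring R] (h : MvPolynomial σ R) (v : σ → ℤ) (k : σ)
    (hk : v k < 0) : coeffInt h v = 0 := by
  rw [coeffInt, if_neg]
  push_neg
  exact ⟨k, hk⟩

lemma quad_eval (H : Matrix σ σ ℝ) (i j : σ) (x y : ℝ) :
    dotProduct (x • (Pi.single i 1 : σ → ℝ) + y • (Pi.single j 1 : σ → ℝ))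
      (H.mulVec (x • (Pi.single i 1 : σ → ℝ) + y • (Pi.single j 1 : σ → ℝ)))
      = x * (x * H i i + y * H i j) + y * (x * H j i + y * H j j) := by
  have hmv : ∀ k, H.mulVec (x • (Pi.single i 1 : σ → ℝ) + y • (Pi.single j 1 : σ → ℝ)) k
      = x * H k i + y * H k j := by
    intro k
    simp only [Matrix.mulVec, dotProduct, Pi.add_apply, Pi.smul_apply,
      Pi.single_apply, smul_eq_mul, mul_add, mul_ite, mul_one, mul_zero,
      Finset.sum_add_distrib]
    rw [Finset.sum_ite_eq' Finset.univ i (fun l => H k l * x),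
        Finset.sum_ite_eq' Finset.univ j (fun l => H k l * y)]
    simp [mul_comm]
  simp only [dotProduct, hmv, Pi.add_apply, Pi.smul_apply, Pi.single_apply,
    smul_eq_mul, mul_ite, mul_one, mul_zero, ite_mul, zero_mul, add_mul,
    Finset.sum_add_distrib]
  rw [Finset.sum_ite_eq' Finset.univ i (fun k => x * (x * H k i + y * H k j)),
      Finset.sum_ite_eq' Finset.univ j (fun k => y * (x * H k i + y * H k j))]
  simp

lemma det_le_of_atMostOnePosEig (H : Matrix σ σ ℝ) (i j : σ) (hij : i ≠ j)
    (hA : AtMostOnePosEig H) (hsym : H i j = H j i) (hii : 0 ≤ H i i) :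
    H i i * H j j ≤ H i j * H j i := by
  by_contra hlt
  push_neg at hlt
  have hb2 : 0 ≤ H i j * H j i := by rw [hsym]; exact mul_self_nonneg _
  have hiipos : 0 < H i i := by
    rcases hii.lt_or_eq with hp | he
    · exact hp
    · exfalso; rw [← he, zero_mul] at hlt; exact absurd (hb2.trans_lt hlt) (lt_irrefl 0)
  set b0 : σ → ℝ := Pi.single i (1:ℝ) with hb0
  set b1 : σ → ℝ := Pi.single j (1:ℝ) with hb1
  set W := Submodule.span ℝ ({b0, b1} : Set (σ → ℝ)) with hW
  have hpos : ∀ v ∈ W, v ≠ 0 → 0 < dotProduct v (H.mulVec v) := by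
    intro v hv hv0
    obtain ⟨x, y, hxy⟩ := Submodule.mem_span_pair.mp hv
    rw [← hxy]
    rw [quad_eval]
    have hQa : 0 < H i i * (x * (x * H i i + y * H i j) + y * (x * H j i + y * H j j)) := by
      by_cases hy : y = 0
      · have hx : x ≠ 0 := by
          intro hx'
          apply hv0
          rw [← hxy, hx', hy, zero_smul, zero_smul, add_zero]
        subst hy
        have : H i i * (x * (x * H i i + 0 * H i j) + 0 * (x * H j i + 0 * H j j))
            = (H i i * x) ^ 2 := by ring
        rw [this]
        positivity
      · have key : H i i * (x * (x * H i i + y * H i j) + y * (x * H j i + y * H j j))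
            = (H i i * x + H i j * y) ^ 2 + (H i i * H j j - H i j * H j i) * y ^ 2 := by
          rw [hsym]; ring
        rw [key]
        have h1 : 0 < (H i i * H j j - H i j * H j i) * y ^ 2 := by
          apply mul_pos (by linarith) (by positivity)
        nlinarith [sq_nonneg (H i i * x + H i j * y)]
    nlinarith [hQa, hiipos]
  have hli : LinearIndependent ℝ ![b0, b1] := by
    rw [linearIndependent_fin2]
    constructor
    · intro h0
      have := congrFun h0 j
      simp [hb1, Matrix.cons_val_one, Pi.single_eq_same] at this
    · intro a ha
      have := congrFun ha i
      simp [hb0, hb1, Pi.single_apply, hij, Pi.single_eq_of_ne, (Ne.symm hij)] at this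
  have hrange : Set.range ![b0, b1] = {b0, b1} := by
    ext v
    simp [Fin.exists_fin_two, or_comm]
  have hrank : Module.finrank ℝ W = 2 := by
    rw [hW, ← hrange]
    rw [finrank_span_eq_card hli]
    simp
  have := hA W hpos
  omega

end Defs

/-- A dually Lorentzian polynomial is discretely log-concave. -/
theorem dually_lorentzian_discretely_log_concave {p : ℕ} (h : MvPolynomial (Fin p) ℝ)
    (hh : IsDuallyLorentzian h) : DiscretelyLogConcave h := by
  obtain ⟨m, hm, d, hhom, hnonneg, -, hquad⟩ := hh
  set f := normalizeOp (flipPoly m h) with hfdef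
  have fcoeff : ∀ α u : Fin p →₀ ℕ, α + u = m → f.coeff α = h.coeff u / factR α := by
    intro α u hu
    have hαm : α ≤ m := by rw [← hu]; exact le_add_right le_rfl
    rw [hfdef, coeff_normalizeOp, coeff_flipPoly hm α hαm]
    rw [← hu, add_tsub_cancel_left]
  have hcoeff_nonneg : ∀ u : Fin p →₀ ℕ, 0 ≤ h.coeff u := by
    intro u
    by_cases hu : u ∈ h.support
    · have hum : u ≤ m := hm u hu
      have h1 := hnonneg (m - u)
      have h2 : f.coeff (m - u) = h.coeff u / factR (m - u) :=
        fcoeff (m - u) u (tsub_add_cancel_of_le hum)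
      rw [h2] at h1
      have h3 := factR_pos (m - u)
      calc (0:ℝ) ≤ (h.coeff u / factR (m - u)) * factR (m - u) := mul_nonneg h1 h3.le
        _ = h.coeff u := div_mul_cancel₀ _ h3.ne'
    · rw [MvPolynomial.notMem_support_iff.mp hu]
  intro n i j
  by_cases hij : i = j
  · subst hij
    rw [coeffInt_eq h _ n (fun k => by ring),
        coeffInt_eq h _ n (fun k => by ring), sq]
  rcases Nat.eq_zero_or_pos (n j) with hnj | hnj
  · rw [coeffInt_neg h (fun k => (n k : ℤ) + (if k = i then 1 else 0) - (if k = j then 1 else 0))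
      j (by show ((n j : ℤ) + if j = i then 1 else 0) - (if j = j then 1 else 0) < 0
            rw [if_neg (fun hh : j = i => hij hh.symm), if_pos rfl, hnj]; norm_num), zero_mul]
    exact sq_nonneg _
  rcases Nat.eq_zero_or_pos (n i) with hni | hni
  · rw [coeffInt_neg h (fun k => (n k : ℤ) - (if k = i then 1 else 0) + (if k = j then 1 else 0))
      i (by show ((n i : ℤ) - if i = i then 1 else 0) + (if i = j then 1 else 0) < 0
            rw [if_pos rfl, if_neg hij, hni]; norm_num), mul_zero]
    exact sq_nonneg _
  set n1 : Fin p →₀ ℕ := n + Finsupp.single i 1 - Finsupp.single j 1 with hn1def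
  set n2 : Fin p →₀ ℕ := n + Finsupp.single j 1 - Finsupp.single i 1 with hn2def
  have e1 : coeffInt h (fun k => (n k : ℤ) + (if k = i then 1 else 0) - (if k = j then 1 else 0))
      = h.coeff n1 := by
    refine coeffInt_eq h _ n1 (fun k => ?_)
    rw [hn1def]
    rw [Finsupp.tsub_apply, Finsupp.add_apply, Finsupp.single_apply, Finsupp.single_apply]
    by_cases hki : k = i
    · subst hki
      rw [if_pos rfl, if_pos rfl, if_neg (fun hh : k = j => hij hh),
        if_neg (fun hh : j = k => hij hh.symm)]
      omega
    · by_cases hkj : k = j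
      · subst hkj
        rw [if_neg hki, if_pos rfl, if_neg (fun hh : i = k => hki hh.symm), if_pos rfl]
        omega
      · rw [if_neg hki, if_neg hkj, if_neg (fun hh : i = k => hki hh.symm),
          if_neg (fun hh : j = k => hkj hh.symm)]
        omega
  have e2 : coeffInt h (fun k => (n k : ℤ) - (if k = i then 1 else 0) + (if k = j then 1 else 0))
      = h.coeff n2 := by
    refine coeffInt_eq h _ n2 (fun k => ?_)
    rw [hn2def]
    rw [Finsupp.tsub_apply, Finsupp.add_apply, Finsupp.single_apply, Finsupp.single_apply]
    by_cases hki : k = i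
    · subst hki
      rw [if_pos rfl, if_pos rfl, if_neg (fun hh : k = j => hij hh),
        if_neg (fun hh : j = k => hij hh.symm)]
      omega
    · by_cases hkj : k = j
      · subst hkj
        rw [if_neg hki, if_pos rfl, if_neg (fun hh : i = k => hki hh.symm), if_pos rfl]
        omega
      · rw [if_neg hki, if_neg hkj, if_neg (fun hh : i = k => hki hh.symm),
          if_neg (fun hh : j = k => hkj hh.symm)]
        omega
  rw [e1, e2]
  by_cases hn1 : n1 ∈ h.support
  swap
  · rw [MvPolynomial.notMem_support_iff.mp hn1, zero_mul]; exact sq_nonneg _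
  by_cases hn2 : n2 ∈ h.support
  swap
  · rw [MvPolynomial.notMem_support_iff.mp hn2, mul_zero]; exact sq_nonneg _
  have hn1m := hm n1 hn1
  have hn2m := hm n2 hn2
  have hle : n + Finsupp.single i 1 + Finsupp.single j 1 ≤ m := by
    rw [Finsupp.le_def]
    intro k
    have h1 := Finsupp.le_def.mp hn1m k
    have h2 := Finsupp.le_def.mp hn2m k
    rw [hn1def, Finsupp.tsub_apply, Finsupp.add_apply] at h1
    rw [hn2def, Finsupp.tsub_apply, Finsupp.add_apply] at h2
    simp only [Finsupp.add_apply, Finsupp.single_apply] at h1 h2 ⊢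
    by_cases hki : i = k
    · subst hki
      rw [if_pos rfl, if_neg (fun hh : j = i => hij hh.symm)] at h1 h2 ⊢
      omega
    · by_cases hkj : j = k
      · subst hkj
        rw [if_neg hki, if_pos rfl] at h1 h2 ⊢
        omega
      · rw [if_neg hki, if_neg hkj] at h1 h2 ⊢
        omega
  set k' : Fin p →₀ ℕ := m - (n + Finsupp.single i 1 + Finsupp.single j 1) with hk'def
  have hk' : k' + (n + Finsupp.single i 1 + Finsupp.single j 1) = m := tsub_add_cancel_of_le hle
  set l : List (Fin p) := k'.toMultiset.toList with hldef
  have hcount : listCount l = k' := by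
    rw [listCount, hldef, Multiset.coe_toList, Finsupp.toMultiset_toFinsupp]
  have hessval : ∀ (a b : Fin p) (u : Fin p →₀ ℕ),
      (Finsupp.single a 1 + (Finsupp.single b 1 + k')) + u = m →
      hessianMatrix (l.foldr (fun i g => pderiv i g) f) a b = h.coeff u := by
    intro a b u hu
    have h0 : hessianMatrix (l.foldr (fun i g => pderiv i g) f) a b
        = coeff 0 (List.foldr (fun i g => pderiv i g) f (a :: b :: l)) := rfl
    have h2 := coeff_foldr_pderiv (a :: b :: l) f 0
    rw [listCount_cons, listCount_cons, hcount, factR_zero, mul_one, zero_add] at h2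
    rw [h0, h2, fcoeff _ u hu, div_mul_cancel₀ _ (factR_pos _).ne']
  have hn1e : n1 + Finsupp.single j 1 = n + Finsupp.single i 1 := by
    rw [hn1def]
    refine tsub_add_cancel_of_le (Finsupp.single_le_iff.mpr ?_)
    rw [Finsupp.add_apply, Finsupp.single_apply, if_neg hij]
    omega
  have hn2e : n2 + Finsupp.single i 1 = n + Finsupp.single j 1 := by
    rw [hn2def]
    refine tsub_add_cancel_of_le (Finsupp.single_le_iff.mpr ?_)
    rw [Finsupp.add_apply, Finsupp.single_apply, if_neg (fun hh : j = i => hij hh.symm)]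
    omega
  have hγ : (Finsupp.single j 1 + (Finsupp.single j 1 + k')) + n1 = m := by
    rw [← hk']
    calc Finsupp.single j 1 + (Finsupp.single j 1 + k') + n1
        = k' + (n1 + Finsupp.single j 1) + Finsupp.single j 1 := by abel
      _ = k' + (n + Finsupp.single i 1) + Finsupp.single j 1 := by rw [hn1e]
      _ = k' + (n + Finsupp.single i 1 + Finsupp.single j 1) := by abel
  have hflen : f.coeff (Finsupp.single j 1 + (Finsupp.single j 1 + k')) ≠ 0 := by
    rw [fcoeff _ n1 hγ]
    exact div_ne_zero (MvPolynomial.mem_support_iff.mp hn1) (factR_pos _).ne'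
  have hd := hhom hflen
  have hwadd : ∀ u v : Fin p →₀ ℕ, (Finsupp.weight (1 : Fin p → ℕ)) (u + v)
      = (Finsupp.weight (1 : Fin p → ℕ)) u + (Finsupp.weight (1 : Fin p → ℕ)) v :=
    fun u v => map_add _ u v
  have hwsingle : (Finsupp.weight (1 : Fin p → ℕ)) (Finsupp.single j (1:ℕ)) = 1 := by
    simp [Finsupp.weight_apply, Finsupp.sum_single_index]
  have hllen : l.length = (Finsupp.weight (1 : Fin p → ℕ)) k' := by
    rw [hldef, Multiset.length_toList, Finsupp.card_toMultiset]
    simp [Finsupp.weight_apply, Finsupp.sum]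
  have hlen : l.length = d - 2 := by
    rw [hwadd, hwadd, hwsingle] at hd
    omega
  have hq := hquad l hlen
  have hHij : hessianMatrix (l.foldr (fun i g => pderiv i g) f) i j = h.coeff n :=
    hessval i j n (by rw [← hk']; abel)
  have hHji : hessianMatrix (l.foldr (fun i g => pderiv i g) f) j i = h.coeff n :=
    hessval j i n (by rw [← hk']; abel)
  have hHii : hessianMatrix (l.foldr (fun i g => pderiv i g) f) i i = h.coeff n2 := by
    refine hessval i i n2 ?_
    rw [← hk']
    calc Finsupp.single i 1 + (Finsupp.single i 1 + k') + n2
        = k' + (n2 + Finsupp.single i 1) + Finsupp.single i 1 := by abel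
      _ = k' + (n + Finsupp.single j 1) + Finsupp.single i 1 := by rw [hn2e]
      _ = k' + (n + Finsupp.single i 1 + Finsupp.single j 1) := by abel
  have hHjj : hessianMatrix (l.foldr (fun i g => pderiv i g) f) j j = h.coeff n1 := by
    refine hessval j j n1 ?_
    rw [← hk']
    calc Finsupp.single j 1 + (Finsupp.single j 1 + k') + n1
        = k' + (n1 + Finsupp.single j 1) + Finsupp.single j 1 := by abel
      _ = k' + (n + Finsupp.single i 1) + Finsupp.single j 1 := by rw [hn1e]
      _ = k' + (n + Finsupp.single i 1 + Finsupp.single j 1) := by abel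
  have hdet := det_le_of_atMostOnePosEig _ i j hij hq (by rw [hHij, hHji])
    (by rw [hHii]; exact hcoeff_nonneg n2)
  rw [hHii, hHjj, hHij, hHji] at hdet
  calc h.coeff n1 * h.coeff n2 = h.coeff n2 * h.coeff n1 := mul_comm _ _
    _ ≤ h.coeff n * h.coeff n := hdet
    _ = h.coeff n ^ 2 := (sq _).symm
end

section
/- For any monomial t_1^{α_1}⋯t_p^{α_p} and any polynomial h ∈ ℝ[t_1,…,t_p], the polynomial h is dually Lorentzian if and only if t_1^{α_1}⋯t_p^{α_p} · h is dually Lorentzian. -/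
open MvPolynomial

section Aux
variable {σ : Type*} [Fintype σ] [DecidableEq σ]

lemma support_monomial_one_mul (α : σ →₀ ℕ) (h : MvPolynomial σ ℝ) :
    (MvPolynomial.monomial α (1:ℝ) * h).support = h.support.map (addLeftEmbedding α) :=
  AddMonoidAlgebra.support_coeff_single_mul h (1:ℝ) (by simp) α

lemma flip_monomial_mul (α m : σ →₀ ℕ) (h : MvPolynomial σ ℝ) :
    flipPoly m (MvPolynomial.monomial α (1:ℝ) * h) = flipPoly (m - α) h := by
  rw [flipPoly, support_monomial_one_mul, Finset.sum_map]
  refine Finset.sum_congr rfl fun n hn => ?_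
  simp only [addLeftEmbedding_apply]
  rw [MvPolynomial.coeff_monomial_mul, one_mul, ← tsub_tsub]

end Aux

/-- `h` is dually Lorentzian iff `t^α · h` is dually Lorentzian, for any monomial `t^α`. -/
theorem monomial_mul_dually_lorentzian_iff {p : ℕ} (α : Fin p →₀ ℕ)
    (h : MvPolynomial (Fin p) ℝ) :
    IsDuallyLorentzian h ↔ IsDuallyLorentzian (MvPolynomial.monomial α 1 * h) := by
  constructor
  · rintro ⟨m, hm, hL⟩
    refine ⟨m + α, fun n hn => ?_, ?_⟩
    · rw [support_monomial_one_mul] at hn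
      obtain ⟨d, hd, rfl⟩ := Finset.mem_map.mp hn
      simpa [addLeftEmbedding_apply, add_comm] using add_le_add_left (hm d hd) α
    · rw [flip_monomial_mul, add_tsub_cancel_right]
      exact hL
  · rintro ⟨m, hm, hL⟩
    have hm' : ∀ n ∈ h.support, α + n ≤ m := fun n hn =>
      hm (α + n) (by rw [support_monomial_one_mul]; exact Finset.mem_map.mpr ⟨n, hn, rfl⟩)
    refine ⟨m - α, fun n hn => ?_, ?_⟩
    · exact (le_tsub_iff_left (le_trans le_self_add (hm' n hn))).mpr (hm' n hn)
    · rw [← flip_monomial_mul]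
      exact hL
end

section
/- Let A be a commutative Noetherian ring, S = A[x_1,…,x_n] graded with deg(x_i) = δ_i > 0, I ⊆ S a homogeneous ideal, and R = S/I. Assume R is finitely generated and flat as an A-module and satisfies Poincaré duality with respect to an orientation ρ: R → A concentrated in degree d. Let G_R(y_1,…,y_n) = Σ_{α_1δ_1 + ⋯ + α_nδ_n = d} ρ(x̄^α) y_1^{α_1}⋯y_n^{α_n} ∈ T = A[y_1,…,y_n], where x̄^α denotes the image in R of the monomial x_1^{α_1}⋯x_n^{α_n}. Then I = { g ∈ S : g · G_R = 0 }, where · denotes the contraction action of S on T. -/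
/-!
The coefficient of `y^γ` in `g · G_R` is `ρ(x̄^γ ḡ)`, so `g · G_R = 0` says exactly that `ḡ`
pairs to zero with all of `R`. Since `ρ` only sees degree `d`, pairing `ḡ` with an element of
degree `d - ν` only sees the degree-`ν` component of `ḡ`, and nondegeneracy of the graded pairing
kills each component; components above degree `d` vanish anyway.
-/

open MvPolynomial

open Classical in
/-- The contraction action of `S = A[x₁,…,x_n]` on the inverse polynomial ring
`T = A[y₁,…,y_n]` (with `yᵢ = xᵢ⁻¹`): on monomials, `x^β · y^γ = y^{γ-β}` if `β ≤ γ`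
componentwise and `0` otherwise, extended bilinearly. -/
noncomputable def contractAction {n : ℕ} {A : Type*} [CommRing A]
    (g G : MvPolynomial (Fin n) A) : MvPolynomial (Fin n) A :=
  g.support.sum fun β => G.support.sum fun m =>
    if β ≤ m then MvPolynomial.monomial (m - β) (g.coeff β * G.coeff m) else 0

section Contraction

variable {n : ℕ} {A : Type*} [CommRing A]

theorem coeff_contractAction (g G : MvPolynomial (Fin n) A) (γ : Fin n →₀ ℕ) :
    (contractAction g G).coeff γ = ∑ β ∈ g.support, g.coeff β * G.coeff (γ + β) := by
  classical
  simp only [contractAction, coeff_sum]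
  refine Finset.sum_congr rfl fun β _ => ?_
  have hterm : ∀ m : Fin n →₀ ℕ,
      coeff γ (if β ≤ m then monomial (m - β) (g.coeff β * G.coeff m) else 0) =
        if γ + β = m then g.coeff β * G.coeff m else 0 := by
    intro m
    by_cases hle : β ≤ m
    · rw [if_pos hle, coeff_monomial]
      refine if_congr ⟨fun h => ?_, fun h => ?_⟩ rfl rfl
      · rw [← h, tsub_add_cancel_of_le hle]
      · rw [← h, add_tsub_cancel_right]
    · rw [if_neg hle, coeff_zero, if_neg]
      rintro rfl
      exact hle le_add_self
  rw [Finset.sum_congr rfl fun m _ => hterm m, Finset.sum_ite_eq]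
  split_ifs with h
  · rfl
  · rw [notMem_support_iff.1 h, mul_zero]

variable (φ : MvPolynomial (Fin n) A →ₗ[A] A) {G : MvPolynomial (Fin n) A}

theorem coeff_contractAction_eq_apply_monomial_mul
    (hG : ∀ α, G.coeff α = φ (monomial α 1)) (g : MvPolynomial (Fin n) A) (γ : Fin n →₀ ℕ) :
    (contractAction g G).coeff γ = φ (monomial γ 1 * g) := by
  rw [coeff_contractAction]
  conv_rhs => rw [g.as_sum, Finset.mul_sum, map_sum]
  refine Finset.sum_congr rfl fun β _ => ?_
  rw [hG, monomial_mul, one_mul, ← smul_eq_mul, ← map_smul, smul_monomial, smul_eq_mul, mul_one]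

theorem contractAction_eq_zero_iff (hG : ∀ α, G.coeff α = φ (monomial α 1))
    (g : MvPolynomial (Fin n) A) : contractAction g G = 0 ↔ ∀ h, φ (h * g) = 0 := by
  constructor
  · intro hg
    have : φ ∘ₗ LinearMap.mulRight A g = 0 := (basisMonomials (Fin n) A).ext fun γ => by
      rw [coe_basisMonomials, LinearMap.comp_apply, LinearMap.mulRight_apply,
        ← coeff_contractAction_eq_apply_monomial_mul φ hG, hg, coeff_zero, LinearMap.zero_apply]
    exact fun h => LinearMap.congr_fun this h
  · intro hg
    refine MvPolynomial.ext _ _ fun γ => ?_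
    rw [coeff_contractAction_eq_apply_monomial_mul φ hG, hg, coeff_zero]

end Contraction

theorem apply_mul_eq_apply_weightedHomogeneousComponent_mul {σ A M : Type*} [CommSemiring A]
    [AddCancelCommMonoid M] {w : σ → M} {d ν μ : M} (hνμ : ν + μ = d)
    (φ : MvPolynomial σ A →ₗ[A] A)
    (hφ : ∀ e ≠ d, ∀ p : MvPolynomial σ A, p.IsWeightedHomogeneous w e → φ p = 0)
    (g : MvPolynomial σ A) {h : MvPolynomial σ A} (hh : h.IsWeightedHomogeneous w μ) :
    φ (g * h) = φ (weightedHomogeneousComponent w ν g * h) := by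
  classical
  suffices φ ∘ₗ LinearMap.mulRight A h =
      φ ∘ₗ LinearMap.mulRight A h ∘ₗ weightedHomogeneousComponent w ν from
    LinearMap.congr_fun this g
  refine (basisMonomials σ A).ext fun α => ?_
  simp only [coe_basisMonomials, LinearMap.comp_apply, LinearMap.mulRight_apply]
  by_cases hα : Finsupp.weight w α = ν
  · rw [weightedHomogeneousComponent_of_mem (isWeightedHomogeneous_monomial w α 1 hα), if_pos rfl]
  · rw [weightedHomogeneousComponent_of_mem (isWeightedHomogeneous_monomial w α 1 rfl),
      if_neg (Ne.symm hα), zero_mul, map_zero]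
    refine hφ _ ?_ _ ((isWeightedHomogeneous_monomial w α 1 rfl).mul hh)
    rw [← hνμ]
    exact fun h => hα (add_right_cancel h)

section Graded

variable {σ A : Type*} [CommRing A] {w : σ → ℕ} {I : Ideal (MvPolynomial σ A)} {d : ℕ}
  {ρ : (MvPolynomial σ A ⧸ I) →ₗ[A] A} {Rcomp : ℕ → Submodule A (MvPolynomial σ A ⧸ I)}

theorem mk_mem_of_isWeightedHomogeneous
    (hRcomp : ∀ ν, Rcomp ν = (weightedHomogeneousSubmodule A w ν).map
      (Ideal.Quotient.mkₐ A I).toLinearMap)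
    {ν : ℕ} {p : MvPolynomial σ A} (hp : p.IsWeightedHomogeneous w ν) :
    Ideal.Quotient.mk I p ∈ Rcomp ν :=
  hRcomp ν ▸ Submodule.mem_map_of_mem ((mem_weightedHomogeneousSubmodule A w ν p).2 hp)

theorem mem_of_forall_map_mk_mul_eq_zero
    (hRcomp : ∀ ν, Rcomp ν = (weightedHomogeneousSubmodule A w ν).map
      (Ideal.Quotient.mkₐ A I).toLinearMap)
    (hρgraded : ∀ ν, ν ≠ d → ∀ r ∈ Rcomp ν, ρ r = 0)
    (htop : ∀ ν, d < ν → Rcomp ν = ⊥)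
    (hnondeg : ∀ ν μ : ℕ, ν + μ = d → ∀ r ∈ Rcomp ν, (∀ s ∈ Rcomp μ, ρ (r * s) = 0) → r = 0)
    {g : MvPolynomial σ A} (hg : ∀ h, ρ (Ideal.Quotient.mk I (h * g)) = 0) : g ∈ I := by
  classical
  set φ := ρ ∘ₗ (Ideal.Quotient.mkₐ A I).toLinearMap
  have hφ : ∀ e ≠ d, ∀ p, p.IsWeightedHomogeneous w e → φ p = 0 := fun e he _ hp =>
    hρgraded e he _ (mk_mem_of_isWeightedHomogeneous hRcomp hp)
  rw [← sum_weightedHomogeneousComponent w g,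
    finsum_eq_sum _ (weightedHomogeneousComponent_finsupp g)]
  refine Ideal.sum_mem _ fun ν _ => ?_
  have hν := mk_mem_of_isWeightedHomogeneous hRcomp
    (weightedHomogeneousComponent_isWeightedHomogeneous (w := w) ν g)
  rw [← Ideal.Quotient.eq_zero_iff_mem]
  rcases le_or_gt ν d with hle | hlt
  · refine hnondeg ν (d - ν) (Nat.add_sub_cancel' hle) _ hν fun s hs => ?_
    rw [hRcomp] at hs
    obtain ⟨h, hh, rfl⟩ := hs
    show φ (weightedHomogeneousComponent w ν g * h) = 0
    rw [← apply_mul_eq_apply_weightedHomogeneousComponent_mul (Nat.add_sub_cancel' hle) φ hφ g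
      ((mem_weightedHomogeneousSubmodule A w (d - ν) h).1 hh), mul_comm]
    exact hg h
  · simpa [htop ν hlt] using hν

end Graded

theorem macaulay_dual_generator_general
    {n : ℕ} {A : Type*} [CommRing A]
    (δ : Fin n → ℕ)
    (I : Ideal (MvPolynomial (Fin n) A))
    (d : ℕ)
    (ρ : (MvPolynomial (Fin n) A ⧸ I) →ₗ[A] A)
    (Rcomp : ℕ → Submodule A (MvPolynomial (Fin n) A ⧸ I))
    (hRcomp : ∀ ν, Rcomp ν = (MvPolynomial.weightedHomogeneousSubmodule A δ ν).map
        (Ideal.Quotient.mkₐ A I).toLinearMap)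
    (hρgraded : ∀ ν, ν ≠ d → ∀ r ∈ Rcomp ν, ρ r = 0)
    (htop : ∀ ν, d < ν → Rcomp ν = ⊥)
    (hnondeg : ∀ ν μ : ℕ, ν + μ = d → ∀ r ∈ Rcomp ν,
        (∀ s ∈ Rcomp μ, ρ (r * s) = 0) → r = 0)
    (GR : MvPolynomial (Fin n) A)
    (hGR : ∀ α : Fin n →₀ ℕ, GR.coeff α =
        (if (α.sum fun i a => a * δ i) = d
         then ρ (Ideal.Quotient.mk I (MvPolynomial.monomial α 1)) else 0)) :
    ∀ g : MvPolynomial (Fin n) A, g ∈ I ↔ contractAction g GR = 0 := by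
  intro g
  set φ := ρ ∘ₗ (Ideal.Quotient.mkₐ A I).toLinearMap
  have hGφ : ∀ α, GR.coeff α = φ (monomial α 1) := by
    intro α
    have hwt : (α.sum fun i a => a * δ i) = Finsupp.weight δ α := by
      simp [Finsupp.weight_apply]
    rw [hGR, hwt]
    split_ifs with hα
    · rfl
    · exact (hρgraded _ hα _ (mk_mem_of_isWeightedHomogeneous hRcomp
        (isWeightedHomogeneous_monomial δ α 1 rfl))).symm
  rw [contractAction_eq_zero_iff φ hGφ]
  refine ⟨fun hg h => ?_, mem_of_forall_map_mk_mul_eq_zero hRcomp hρgraded htop hnondeg⟩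
  show ρ (Ideal.Quotient.mk I (h * g)) = 0
  rw [Ideal.Quotient.eq_zero_iff_mem.2 (I.mul_mem_left h hg), map_zero]

/-- Let `A` be a commutative Noetherian ring, `S = A[x₁,…,x_n]` graded with `deg xᵢ = δᵢ > 0`,
`I ⊆ S` a homogeneous ideal, and `R = S ⧸ I` finitely generated and flat as an `A`-module
(with graded components `Rcomp ν`, the images of the weighted-homogeneous components of `S`).
Suppose `R` satisfies Poincaré duality with respect to an orientation `ρ : R → A` concentrated
in degree `d`: `ρ` vanishes in degrees `≠ d`, the components vanish above degree `d`, and the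
pairing `(r,s) ↦ ρ(r·s)` between `Rcomp ν` and `Rcomp (d-ν)` is perfect (nondegenerate and
surjective onto the dual). Let `G_R = Σ_{Σαᵢδᵢ = d} ρ(x̄^α) y^α` in `T = A[y₁,…,y_n]`.
Then `I = { g ∈ S : g · G_R = 0 }` for the contraction action. -/
theorem macaulay_dual_generator
    {n : ℕ} {A : Type*} [CommRing A] [IsNoetherianRing A]
    (δ : Fin n → ℕ) (hδ : ∀ i, 0 < δ i)
    (I : Ideal (MvPolynomial (Fin n) A))
    (hI : ∀ f ∈ I, ∀ e : ℕ, MvPolynomial.weightedHomogeneousComponent δ e f ∈ I)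
    (hfin : Module.Finite A (MvPolynomial (Fin n) A ⧸ I))
    (hflat : Module.Flat A (MvPolynomial (Fin n) A ⧸ I))
    (d : ℕ)
    (ρ : (MvPolynomial (Fin n) A ⧸ I) →ₗ[A] A)
    (Rcomp : ℕ → Submodule A (MvPolynomial (Fin n) A ⧸ I))
    (hRcomp : ∀ ν, Rcomp ν = (MvPolynomial.weightedHomogeneousSubmodule A δ ν).map
        (Ideal.Quotient.mkₐ A I).toLinearMap)
    (hρgraded : ∀ ν, ν ≠ d → ∀ r ∈ Rcomp ν, ρ r = 0)
    (htop : ∀ ν, d < ν → Rcomp ν = ⊥)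
    (hnondeg : ∀ ν μ : ℕ, ν + μ = d → ∀ r ∈ Rcomp ν,
        (∀ s ∈ Rcomp μ, ρ (r * s) = 0) → r = 0)
    (hsurj : ∀ ν μ : ℕ, ν + μ = d → ∀ φ : (Rcomp μ) →ₗ[A] A,
        ∃ r ∈ Rcomp ν, ∀ s : Rcomp μ,
          φ s = ρ (r * (s : MvPolynomial (Fin n) A ⧸ I)))
    (GR : MvPolynomial (Fin n) A)
    (hGR : ∀ α : Fin n →₀ ℕ, GR.coeff α =
        (if (α.sum fun i a => a * δ i) = d
         then ρ (Ideal.Quotient.mk I (MvPolynomial.monomial α 1)) else 0)) :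
    ∀ g : MvPolynomial (Fin n) A, g ∈ I ↔ contractAction g GR = 0 :=
  macaulay_dual_generator_general δ I d ρ Rcomp hRcomp hρgraded htop hnondeg GR hGR
end

section
/- Let k be an algebraically closed field, R = k[x_1,…,x_n] a positively ℕ^p-graded polynomial ring, and φ: R → S the standardization homomorphism into the standard ℕ^p-graded polynomial ring S = k[y_{i,j}]. If I ⊆ R is a homogeneous prime ideal containing none of the variables x_1,…,x_n, then its standardization J = φ(I)S ⊆ S is a prime ideal. -/
open MvPolynomial

/-- The standardization homomorphism `φ : k[x₁,…,x_n] → k[y_{i,j}]`, `xᵢ ↦ yᵢ,₁⋯yᵢ,ℓᵢ`. -/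
noncomputable def standardization {n : ℕ} (k : Type*) [CommSemiring k] (ℓ : Fin n → ℕ) :
    MvPolynomial (Fin n) k →ₐ[k] MvPolynomial (Σ i : Fin n, Fin (ℓ i)) k :=
  MvPolynomial.aeval fun i => ∏ j : Fin (ℓ i), MvPolynomial.X ⟨i, j⟩

namespace StdAux

private lemma prod_single_aux {F G ι : Type*} [CommSemiring F] [AddCommMonoid G]
    (s : Finset ι) (a : ι → G) (b : ι → F) :
    ∏ i ∈ s, (AddMonoidAlgebra.single (a i) (b i) : AddMonoidAlgebra F G)
      = AddMonoidAlgebra.single (∑ i ∈ s, a i) (∏ i ∈ s, b i) := by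
  classical
  induction s using Finset.induction with
  | empty => simp [AddMonoidAlgebra.one_def]
  | @insert x s hx ih =>
      rw [Finset.prod_insert hx, Finset.prod_insert hx, Finset.sum_insert hx, ih,
        AddMonoidAlgebra.single_mul_single]

private lemma prod_monomial_aux {k σ ι : Type*} [CommSemiring k]
    (s : Finset ι) (d : ι → (σ →₀ ℕ)) :
    ∏ i ∈ s, (monomial (d i) (1 : k)) = monomial (∑ i ∈ s, d i) 1 := by
  classical
  induction s using Finset.induction with
  | empty => simp
  | @insert x s hx ih =>
      rw [Finset.prod_insert hx, Finset.sum_insert hx, ih, monomial_mul, one_mul]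

variable {n : ℕ} {k : Type*} [Field k] {ℓ : Fin n → ℕ}

/-- exponent lattice for the Laurent-type monomial algebra -/
private abbrev G (ℓ : Fin n → ℕ) : Type _ := (Σ i : Fin n, Fin (ℓ i)) → ℤ

private noncomputable def vmap (ℓ : Fin n → ℕ) (I : Ideal (MvPolynomial (Fin n) k)) :
    (Σ i : Fin n, Fin (ℓ i)) → AddMonoidAlgebra (MvPolynomial (Fin n) k ⧸ I) (G ℓ) :=
  fun q =>
    (if (q.2 : ℕ) = 0 then
      AddMonoidAlgebra.single (fun q' : Σ i : Fin n, Fin (ℓ i) =>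
        if q'.1 = q.1 then (-1 : ℤ) else 0) (Ideal.Quotient.mk I (X q.1))
    else 1)
    * AddMonoidAlgebra.single (fun q' => if q' = q then (1 : ℤ) else 0) 1

private noncomputable def psi (ℓ : Fin n → ℕ) (I : Ideal (MvPolynomial (Fin n) k)) :
    MvPolynomial (Σ i : Fin n, Fin (ℓ i)) k →+* AddMonoidAlgebra (MvPolynomial (Fin n) k ⧸ I) (G ℓ) :=
  eval₂Hom (AddMonoidAlgebra.singleZeroRingHom.comp
    ((Ideal.Quotient.mk I : MvPolynomial (Fin n) k →+* MvPolynomial (Fin n) k ⧸ I).comp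
      MvPolynomial.C)) (vmap ℓ I)

private def cmap (hpos : ∀ i, 0 < ℓ i) (b : (Σ i : Fin n, Fin (ℓ i)) →₀ ℕ) : G ℓ :=
  fun q => (b q : ℤ) - b ⟨q.1, ⟨0, hpos q.1⟩⟩

private noncomputable def wcoef (hpos : ∀ i, 0 < ℓ i) (I : Ideal (MvPolynomial (Fin n) k))
    (b : (Σ i : Fin n, Fin (ℓ i)) →₀ ℕ) (c : k) : MvPolynomial (Fin n) k ⧸ I :=
  Ideal.Quotient.mk I (MvPolynomial.C c * ∏ i : Fin n, X i ^ (b ⟨i, ⟨0, hpos i⟩⟩))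

private lemma blocksum (i : Fin n) :
    (∑ j : Fin (ℓ i), fun q' : Σ i : Fin n, Fin (ℓ i) =>
      if q' = ⟨i, j⟩ then (1 : ℤ) else 0)
    = fun q' => if q'.1 = i then 1 else 0 := by
  classical
  funext q'
  rw [Finset.sum_apply]
  rcases q' with ⟨i', j'⟩
  by_cases h : i' = i
  · subst h
    simp only [Sigma.mk.inj_iff, heq_eq_eq, true_and]
    simp [Finset.sum_ite_eq']
  · rw [Finset.sum_eq_zero, if_neg h]
    intro j _
    rw [if_neg]
    intro hc
    exact h (congrArg (fun s : (Σ i : Fin n, Fin (ℓ i)) => s.1) hc)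

private lemma blocksum_finsupp (i : Fin n) (q : Σ i : Fin n, Fin (ℓ i)) :
    (∑ j : Fin (ℓ i), Finsupp.single (⟨i, j⟩ : Σ i : Fin n, Fin (ℓ i)) (1 : ℕ)) q
    = if q.1 = i then 1 else 0 := by
  classical
  rw [Finset.sum_apply']
  rcases q with ⟨i', j'⟩
  by_cases h : i' = i
  · subst h
    simp only [Finsupp.single_apply, Sigma.mk.inj_iff, heq_eq_eq, true_and]
    simp [Finset.sum_ite_eq]
  · rw [Finset.sum_eq_zero, if_neg h]
    intro j _
    rw [Finsupp.single_apply, if_neg]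
    intro hc
    exact h (congrArg (fun s : (Σ i : Fin n, Fin (ℓ i)) => s.1) hc).symm

private lemma psi_monomial (hpos : ∀ i, 0 < ℓ i) (I : Ideal (MvPolynomial (Fin n) k))
    (b : (Σ i : Fin n, Fin (ℓ i)) →₀ ℕ) (c : k) :
    psi ℓ I (monomial b c) = AddMonoidAlgebra.single (cmap hpos b) (wcoef hpos I b c) := by
  classical
  rw [psi, eval₂Hom_monomial, Finsupp.prod_fintype _ _ (fun q => pow_zero _)]
  have hv : ∀ q : Σ i : Fin n, Fin (ℓ i), vmap ℓ I q ^ b q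
      = (if (q.2 : ℕ) = 0 then
          AddMonoidAlgebra.single (fun q' : Σ i : Fin n, Fin (ℓ i) =>
            if q'.1 = q.1 then (-1 : ℤ) else 0) (Ideal.Quotient.mk I (X q.1)) else 1) ^ (b q)
        * AddMonoidAlgebra.single (fun q' => if q' = q then (b q : ℤ) else 0) 1 := by
    intro q
    have he : (b q • fun q' : Σ i : Fin n, Fin (ℓ i) => if q' = q then (1 : ℤ) else 0)
        = fun q' => if q' = q then (b q : ℤ) else 0 := by
      funext q'
      simp only [Pi.smul_apply]
      split_ifs <;> simp
    rw [vmap, mul_pow (M := AddMonoidAlgebra (MvPolynomial (Fin n) k ⧸ I) (G ℓ)), AddMonoidAlgebra.single_pow, one_pow, he]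
  rw [Finset.prod_congr rfl fun q _ => hv q, Finset.prod_mul_distrib,
    prod_single_aux, Finset.prod_const_one]
  have hs2 : (∑ q : Σ i : Fin n, Fin (ℓ i),
      fun q' : Σ i : Fin n, Fin (ℓ i) => if q' = q then (b q : ℤ) else 0)
      = fun q' => (b q' : ℤ) := by
    funext q'
    rw [Finset.sum_apply]
    simp [Finset.sum_ite_eq]
  rw [hs2]
  -- first factor over sigma
  have hfst : (∏ q : Σ i : Fin n, Fin (ℓ i),
      (if (q.2 : ℕ) = 0 then
        AddMonoidAlgebra.single (fun q' : Σ i : Fin n, Fin (ℓ i) =>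
          if q'.1 = q.1 then (-1 : ℤ) else 0) (Ideal.Quotient.mk I (X q.1)) else 1) ^ (b q))
      = AddMonoidAlgebra.single
          (∑ i : Fin n, (b ⟨i, ⟨0, hpos i⟩⟩ : ℕ) •
            (fun q' : Σ i : Fin n, Fin (ℓ i) => if q'.1 = i then (-1 : ℤ) else 0))
          (∏ i : Fin n, Ideal.Quotient.mk I (X i) ^ (b ⟨i, ⟨0, hpos i⟩⟩)) := by
    rw [← Finset.univ_sigma_univ, Finset.prod_sigma]
    have hinner : ∀ i : Fin n,
        (∏ j : Fin (ℓ i),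
          (if (((⟨i, j⟩ : Σ i : Fin n, Fin (ℓ i)).2 : Fin (ℓ i)) : ℕ) = 0 then
            AddMonoidAlgebra.single (fun q' : Σ i : Fin n, Fin (ℓ i) =>
              if q'.1 = i then (-1 : ℤ) else 0) (Ideal.Quotient.mk I (X i)) else 1)
            ^ (b ⟨i, j⟩))
        = AddMonoidAlgebra.single
            ((b ⟨i, ⟨0, hpos i⟩⟩ : ℕ) •
              (fun q' : Σ i : Fin n, Fin (ℓ i) => if q'.1 = i then (-1 : ℤ) else 0))
            (Ideal.Quotient.mk I (X i) ^ (b ⟨i, ⟨0, hpos i⟩⟩)) := by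
      intro i
      rw [Finset.prod_eq_single_of_mem (⟨0, hpos i⟩ : Fin (ℓ i)) (Finset.mem_univ _)
        (fun j _ hj => by
          rw [if_neg, one_pow]
          intro h0
          exact hj (Fin.ext h0))]
      rw [if_pos rfl, AddMonoidAlgebra.single_pow]
    rw [Finset.prod_congr rfl fun i _ => hinner i, prod_single_aux]
  rw [hfst, AddMonoidAlgebra.single_mul_single]
  rw [RingHom.comp_apply, RingHom.comp_apply]
  show AddMonoidAlgebra.single 0 (Ideal.Quotient.mk I (MvPolynomial.C c)) * _ = _
  rw [AddMonoidAlgebra.single_mul_single]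
  congr 1
  · funext q
    simp only [Pi.add_apply, Pi.zero_apply, Finset.sum_apply, Pi.smul_apply, zero_add]
    have : ∀ i : Fin n, (b ⟨i, ⟨0, hpos i⟩⟩ : ℕ) • (if q.1 = i then (-1 : ℤ) else 0)
        = if q.1 = i then -((b ⟨i, ⟨0, hpos i⟩⟩ : ℕ) : ℤ) else 0 := by
      intro i; split_ifs <;> simp
    rw [Finset.sum_congr rfl fun i _ => this i, Finset.sum_ite_eq]
    simp [cmap]
    ring
  · rw [wcoef, map_mul, map_prod]
    simp [map_pow]


private lemma psi_comp (hpos : ∀ i, 0 < ℓ i) (I : Ideal (MvPolynomial (Fin n) k))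
    (h : MvPolynomial (Fin n) k) :
    psi ℓ I (standardization k ℓ h)
      = AddMonoidAlgebra.single 0 (Ideal.Quotient.mk I h) := by
  classical
  have key : (psi ℓ I).comp (standardization k ℓ).toRingHom
      = AddMonoidAlgebra.singleZeroRingHom.comp
        (Ideal.Quotient.mk I : MvPolynomial (Fin n) k →+* MvPolynomial (Fin n) k ⧸ I) := by
    apply MvPolynomial.ringHom_ext
    · intro c
      simp only [RingHom.comp_apply, AlgHom.toRingHom_eq_coe, RingHom.coe_coe]
      rw [show (standardization k ℓ) (MvPolynomial.C c) = MvPolynomial.C c by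
        rw [standardization, aeval_C, algebraMap_eq]]
      rw [psi, eval₂Hom_C]
      rfl
    · intro i
      simp only [RingHom.comp_apply, AlgHom.toRingHom_eq_coe, RingHom.coe_coe]
      rw [show (standardization k ℓ) (X i) = ∏ j : Fin (ℓ i), X (⟨i, j⟩ : Σ i : Fin n, Fin (ℓ i)) by
        rw [standardization, aeval_X]]
      rw [map_prod]
      have hX : ∀ j : Fin (ℓ i), psi ℓ I (X (⟨i, j⟩ : Σ i : Fin n, Fin (ℓ i))) = vmap ℓ I ⟨i, j⟩ :=
        fun j => eval₂Hom_X' _ _ _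
      rw [Finset.prod_congr rfl fun j _ => hX j]
      unfold vmap
      rw [Finset.prod_mul_distrib, prod_single_aux, Finset.prod_const_one, blocksum]
      rw [Finset.prod_eq_single_of_mem (⟨0, hpos i⟩ : Fin (ℓ i)) (Finset.mem_univ _)
        (fun j _ hj => by
          rw [if_neg]
          intro h0
          exact hj (Fin.ext h0))]
      rw [if_pos rfl, AddMonoidAlgebra.single_mul_single, mul_one]
      have hzero : ((fun q' : Σ i : Fin n, Fin (ℓ i) => if q'.1 = i then (-1 : ℤ) else 0)
          + fun q' => if q'.1 = i then 1 else 0) = 0 := by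
        funext q'
        simp only [Pi.add_apply, Pi.zero_apply]
        split_ifs <;> simp
      rw [hzero]
      rfl
  exact RingHom.congr_fun key h

private lemma ker_le (hpos : ∀ i, 0 < ℓ i) (I : Ideal (MvPolynomial (Fin n) k)) [I.IsPrime]
    (hvar : ∀ i : Fin n, X i ∉ I)
    (f : MvPolynomial (Σ i : Fin n, Fin (ℓ i)) k) (hf : psi ℓ I f = 0) :
    f ∈ Ideal.map (standardization k ℓ) I := by
  classical
  -- the zero-index variable in block i
  have hexp : psi ℓ I f = ∑ b ∈ f.support,
      AddMonoidAlgebra.single (cmap hpos b) (wcoef hpos I b (coeff b f)) := by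
    conv_lhs => rw [← support_sum_monomial_coeff f]
    rw [map_sum]
    exact Finset.sum_congr rfl fun b _ => psi_monomial hpos I b _
  have hsum : ∀ g : G ℓ,
      ∑ b ∈ f.support.filter (fun b => cmap hpos b = g), wcoef hpos I b (coeff b f) = 0 := by
    intro g
    have h1 : (0 : AddMonoidAlgebra (MvPolynomial (Fin n) k ⧸ I) (G ℓ)).coeff g = 0 := rfl
    rw [← hf, hexp, AddMonoidAlgebra.coeff_sum, Finset.sum_apply'] at h1
    calc ∑ b ∈ f.support.filter (fun b => cmap hpos b = g), wcoef hpos I b (coeff b f)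
        = ∑ b ∈ f.support, if cmap hpos b = g then wcoef hpos I b (coeff b f) else 0 :=
          Finset.sum_filter _ _
      _ = ∑ b ∈ f.support,
            (AddMonoidAlgebra.single (cmap hpos b) (wcoef hpos I b (coeff b f))).coeff g :=
          Finset.sum_congr rfl fun b _ => (Finsupp.single_apply).symm
      _ = 0 := h1
  rw [← support_sum_monomial_coeff f,
    ← Finset.sum_fiberwise_of_maps_to (t := f.support.image (cmap hpos))
      (fun b hb => Finset.mem_image_of_mem _ hb) (fun b => monomial b (coeff b f))]
  refine Ideal.sum_mem _ fun g _ => ?_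
  set Fg := f.support.filter (fun b => cmap hpos b = g) with hFg
  set μ0 : Fin n → ℕ := fun i => Finset.univ.sup fun j : Fin (ℓ i) => (-(g ⟨i, j⟩)).toNat with hμ0
  have hga : ∀ q : Σ i : Fin n, Fin (ℓ i), (0 : ℤ) ≤ g q + μ0 q.1 := by
    intro q
    have h1 : (-(g q)).toNat ≤ μ0 q.1 := by
      have haux : ∀ (i : Fin n) (j : Fin (ℓ i)), (-(g ⟨i, j⟩)).toNat ≤ μ0 i := fun i j => by
        rw [hμ0]
        exact Finset.le_sup (f := fun j' : Fin (ℓ i) => (-(g ⟨i, j'⟩)).toNat)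
          (Finset.mem_univ j)
      simpa using haux q.1 q.2
    have h2 : -(g q) ≤ ((-(g q)).toNat : ℤ) := Int.self_le_toNat _
    have h3 : (((-(g q)).toNat : ℕ) : ℤ) ≤ (μ0 q.1 : ℤ) := by exact_mod_cast h1
    omega
  have hcm : ∀ b ∈ Fg, ∀ q : Σ i : Fin n, Fin (ℓ i),
      g q = (b q : ℤ) - b ⟨q.1, ⟨0, hpos q.1⟩⟩ := by
    intro b hb q
    exact (congrFun (Finset.mem_filter.mp hb).2 q).symm
  have hgb : ∀ b ∈ Fg, ∀ i : Fin n, μ0 i ≤ b ⟨i, ⟨0, hpos i⟩⟩ := by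
    intro b hb i
    refine Finset.sup_le fun j _ => ?_
    rw [Int.toNat_le]
    have h1 : g ⟨i, j⟩ = (b ⟨i, j⟩ : ℤ) - b ⟨i, ⟨0, hpos i⟩⟩ := hcm b hb ⟨i, j⟩
    have h2 : (0 : ℤ) ≤ (b ⟨i, j⟩ : ℤ) := by positivity
    omega
  set ν : ((Σ i : Fin n, Fin (ℓ i)) →₀ ℕ) → (Fin n →₀ ℕ) :=
    fun b => Finsupp.equivFunOnFinite.symm fun i => b ⟨i, ⟨0, hpos i⟩⟩ - μ0 i with hν
  have hνapp : ∀ b i, ν b i = b ⟨i, ⟨0, hpos i⟩⟩ - μ0 i := by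
    intro b i
    rw [hν]
    exact congrFun (Finsupp.coe_equivFunOnFinite_symm _) _
  set r : (Σ i : Fin n, Fin (ℓ i)) →₀ ℕ :=
    Finsupp.equivFunOnFinite.symm fun q => (g q + μ0 q.1).toNat with hr
  have hrapp : ∀ q, r q = (g q + μ0 q.1).toNat := by
    intro q
    rw [hr]
    exact congrFun (Finsupp.coe_equivFunOnFinite_symm _) _
  set h' : MvPolynomial (Fin n) k := ∑ b ∈ Fg, monomial (ν b) (coeff b f) with hh'
  -- h' ∈ I
  have hfac : ∀ b ∈ Fg, wcoef hpos I b (coeff b f)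
      = Ideal.Quotient.mk I (∏ i : Fin n, X i ^ μ0 i)
        * Ideal.Quotient.mk I (monomial (ν b) (coeff b f)) := by
    intro b hb
    rw [wcoef, ← map_mul]
    congr 1
    rw [monomial_eq, Finsupp.prod_fintype _ _ (fun i => pow_zero _)]
    have hXsplit : ∀ i : Fin n, (X i : MvPolynomial (Fin n) k) ^ (b ⟨i, ⟨0, hpos i⟩⟩)
        = X i ^ μ0 i * X i ^ (ν b i) := by
      intro i
      rw [← pow_add]
      congr 1
      have h1 := hgb b hb i
      rw [hνapp]
      omega
    rw [Finset.prod_congr rfl fun i _ => hXsplit i, Finset.prod_mul_distrib]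
    ring
  have h0 : Ideal.Quotient.mk I (∏ i : Fin n, X i ^ μ0 i) * Ideal.Quotient.mk I h' = 0 := by
    rw [hh', map_sum, Finset.mul_sum, ← hsum g]
    exact Finset.sum_congr rfl fun b hb => (hfac b hb).symm
  have hX0 : Ideal.Quotient.mk I (∏ i : Fin n, X i ^ μ0 i) ≠ 0 := by
    rw [map_prod]
    refine Finset.prod_ne_zero_iff.mpr fun i _ => ?_
    rw [map_pow]
    refine pow_ne_zero _ fun hc => ?_
    exact hvar i (Ideal.Quotient.eq_zero_iff_mem.mp hc)
  have hmem : h' ∈ I := by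
    rw [← Ideal.Quotient.eq_zero_iff_mem]
    rcases mul_eq_zero.mp h0 with h | h
    · exact absurd h hX0
    · exact h
  -- the fiber sum is φ h' * monomial r 1
  have hrepr : ∑ b ∈ Fg, monomial b (coeff b f)
      = (standardization k ℓ) h' * monomial r 1 := by
    rw [hh', map_sum, Finset.sum_mul]
    refine Finset.sum_congr rfl fun b hb => ?_
    rw [standardization, aeval_monomial, algebraMap_eq,
      Finsupp.prod_fintype _ _ (fun i => pow_zero _)]
    have hXq : ∀ i : Fin n,
        (∏ j : Fin (ℓ i), (X (⟨i, j⟩ : Σ i : Fin n, Fin (ℓ i)) : MvPolynomial (Σ i : Fin n, Fin (ℓ i)) k))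
        = monomial (∑ j : Fin (ℓ i), Finsupp.single (⟨i, j⟩ : Σ i : Fin n, Fin (ℓ i)) 1) 1 := by
      intro i
      rw [← prod_monomial_aux]
      exact Finset.prod_congr rfl fun j _ => rfl
    rw [Finset.prod_congr rfl fun i _ => by rw [hXq i, monomial_pow, one_pow],
      prod_monomial_aux, C_mul_monomial, mul_one, monomial_mul, mul_one]
    have hexpo : (∑ i : Fin n, (ν b) i • ∑ j : Fin (ℓ i),
        Finsupp.single (⟨i, j⟩ : Σ i : Fin n, Fin (ℓ i)) (1 : ℕ)) + r = b := by
      refine Finsupp.ext fun q => ?_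
      rw [Finsupp.add_apply, Finset.sum_apply']
      have hBi : ∀ i : Fin n, ((ν b) i • ∑ j : Fin (ℓ i),
          Finsupp.single (⟨i, j⟩ : Σ i : Fin n, Fin (ℓ i)) (1 : ℕ)) q
          = if q.1 = i then ν b i else 0 := by
        intro i
        rw [Finsupp.smul_apply, blocksum_finsupp]
        split_ifs <;> simp
      rw [Finset.sum_congr rfl fun i _ => hBi i, Finset.sum_ite_eq]
      simp only [Finset.mem_univ, if_true]
      have h1 := hcm b hb q
      have h2 := hgb b hb q.1
      have h3 := hga q
      have h4 : ((g q + μ0 q.1).toNat : ℤ) = g q + μ0 q.1 := Int.toNat_of_nonneg h3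
      rw [hνapp, hrapp]
      omega
    rw [hexpo]
  rw [hrepr]
  exact Ideal.mul_mem_right _ _ (Ideal.mem_map_of_mem _ hmem)

end StdAux

/-- Let `R = k[x₁,…,x_n]` be positively `ℕ^p`-graded (`deg xᵢ = D i ≠ 0`) over an algebraically
closed field `k`, and let `S = k[y_{i,j} : 1 ≤ j ≤ ℓᵢ]` (with `ℓᵢ = |D i|`) be standard
`ℕ^p`-graded, each `y_{i,j}` having degree a standard basis vector, so that
`deg xᵢ = Σⱼ deg y_{i,j}`. If `I ⊆ R` is a homogeneous prime ideal containing no variable,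
then its standardization `J = φ(I)S` is prime. -/
theorem standardization_prime {p n : ℕ} (k : Type*) [Field k] [IsAlgClosed k]
    (D : Fin n → Fin p → ℕ) (hD : ∀ i, D i ≠ 0)
    (ℓ : Fin n → ℕ) (hℓ : ∀ i, ℓ i = ∑ c, D i c)
    (degY : (Σ i : Fin n, Fin (ℓ i)) → Fin p)
    (hdegY : ∀ (i : Fin n) (c : Fin p),
      (Finset.univ.filter fun j : Fin (ℓ i) => degY ⟨i, j⟩ = c).card = D i c)
    (I : Ideal (MvPolynomial (Fin n) k))
    (hI : ∀ f ∈ I, ∀ e : Fin p → ℕ, MvPolynomial.weightedHomogeneousComponent D e f ∈ I)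
    (hprime : I.IsPrime)
    (hvar : ∀ i : Fin n, MvPolynomial.X i ∉ I) :
    (Ideal.map (standardization k ℓ) I).IsPrime := by
  classical
  have hpos : ∀ i, 0 < ℓ i := by
    intro i
    rw [hℓ]
    rcases Function.ne_iff.mp (hD i) with ⟨c, hc⟩
    exact lt_of_lt_of_le (Nat.pos_of_ne_zero hc)
      (Finset.single_le_sum (fun _ _ => Nat.zero_le _) (Finset.mem_univ c))
  have hle1 : Ideal.map (standardization k ℓ) I ≤ RingHom.ker (StdAux.psi ℓ I) := by
    rw [Ideal.map_le_iff_le_comap]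
    intro h hh
    simp only [Ideal.mem_comap, RingHom.mem_ker, AlgHom.toRingHom_eq_coe, RingHom.coe_coe]
    rw [StdAux.psi_comp hpos I h, Ideal.Quotient.eq_zero_iff_mem.mpr hh]
    simp
  have heq : Ideal.map (standardization k ℓ) I = RingHom.ker (StdAux.psi ℓ I) :=
    le_antisymm hle1 fun f hf => StdAux.ker_le hpos I hvar f hf
  rw [heq]
  haveI : IsDomain (AddMonoidAlgebra (MvPolynomial (Fin n) k ⧸ I) (StdAux.G ℓ)) :=
    NoZeroDivisors.to_isDomain _
  exact RingHom.ker_isPrime _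
end
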